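/- With the notation above, the SNMF loss equals the (non-negative) spectral contrastive loss up to an additive constant: ‖Ā − FF^T‖_F² = C − 2 E_{(x,x⁺)∼P(·,·)}[f(x)^T f(x⁺)] + E_{x∼P, x⁻∼P}[(f(x)^T f(x⁻))²], where C = Σ_{x,x'} P(x,x')²/(P(x)P(x')) does not depend on f. Hence minimizing ‖Ā − FF^T‖_F² over f is equivalent to minimizing the spectral contrastive loss. -/
import Mathlib


open Matrix Finset

/-- The SNMF loss equals the non-negative spectral contrastive loss
up to an additive constant `C = ∑ P(x,x')²/(P(x)P(x'))` independent of `f`: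
`‖Ā − FFᵀ‖_F² = C − 2 E_{(x,x⁺)∼P}[f(x)ᵀf(x⁺)] + E_{x,x⁻∼P}[(f(x)ᵀf(x⁻))²]`,
where the expectations are the sums weighted by the joint `P(x,x')` and by the
product of marginals `P(x)P(x⁻)` respectively. -/
theorem snmf_eq_spectral_contrastive {X : Type*} [Fintype X] (k : ℕ)
    (P : X → X → ℝ) (Pm : X → ℝ)
    (hsymm : ∀ x x', P x x' = P x' x)
    (hnonneg : ∀ x x', 0 ≤ P x x')
    (hmarg : ∀ x, Pm x = ∑ x', P x x')
    (hpos : ∀ x, 0 < Pm x)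
    (Abar : Matrix X X ℝ)
    (hA : ∀ x x', Abar x x' = P x x' / Real.sqrt (Pm x * Pm x'))
    (f : X → Fin k → ℝ)
    (F : Matrix X (Fin k) ℝ)
    (hF : ∀ x i, F x i = Real.sqrt (Pm x) * f x i) :
    ∃ C : ℝ, C = (∑ x, ∑ x', P x x' ^ 2 / (Pm x * Pm x')) ∧
      (∑ x, ∑ x', (Abar x x' - (F * Fᵀ) x x') ^ 2)
        = C - 2 * (∑ x, ∑ x', P x x' * (∑ i, f x i * f x' i))
          + ∑ x, ∑ x', Pm x * Pm x' * (∑ i, f x i * f x' i) ^ 2 := by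
  refine ⟨_, rfl, ?_⟩
  have key : ∀ x x', (Abar x x' - (F * Fᵀ) x x') ^ 2
      = P x x' ^ 2 / (Pm x * Pm x')
        - 2 * (P x x' * (∑ i, f x i * f x' i))
        + Pm x * Pm x' * (∑ i, f x i * f x' i) ^ 2 := by
    intro x x'
    have hx := hpos x
    have hx' := hpos x'
    set s := Real.sqrt (Pm x) with hs
    set s' := Real.sqrt (Pm x') with hs'
    have hsq : s * s = Pm x := Real.mul_self_sqrt hx.le
    have hsq' : s' * s' = Pm x' := Real.mul_self_sqrt hx'.le
    have hsne : s ≠ 0 := ne_of_gt (Real.sqrt_pos.mpr hx)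
    have hsne' : s' ≠ 0 := ne_of_gt (Real.sqrt_pos.mpr hx')
    have hFFt : (F * Fᵀ) x x' = s * s' * ∑ i, f x i * f x' i := by
      simp only [Matrix.mul_apply, Matrix.transpose_apply, hF, Finset.mul_sum]
      exact Finset.sum_congr rfl fun i _ => by ring
    have hAx : Abar x x' = P x x' / (s * s') := by
      rw [hA, Real.sqrt_mul hx.le]
    rw [hFFt, hAx]
    have key2 : P x x' / (s * s') * (s * s') = P x x' :=
      div_mul_cancel₀ _ (mul_ne_zero hsne hsne')
    have e1 : (P x x' / (s * s')) ^ 2 = P x x' ^ 2 / (Pm x * Pm x') := by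
      rw [div_pow]; congr 1; rw [sq, ← hsq, ← hsq']; ring
    have e2 : P x x' / (s * s') * (s * s' * ∑ i, f x i * f x' i)
        = P x x' * ∑ i, f x i * f x' i := by
      rw [← mul_assoc, key2]
    rw [sub_sq, e1,
      show 2 * (P x x' / (s * s')) * (s * s' * ∑ i, f x i * f x' i)
        = 2 * (P x x' / (s * s') * (s * s' * ∑ i, f x i * f x' i)) by ring, e2,
      mul_pow, show (s * s') ^ 2 = Pm x * Pm x' by rw [sq, ← hsq, ← hsq']; ring]
  simp only [key, Finset.sum_add_distrib, Finset.sum_sub_distrib, Finset.mul_sum]
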